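/- Let V be a graded k-module, and consider the graded algebra k ⊕ s^{-1}V with trivial product (square-zero). The Hochschild homology of k ⊕ s^{-1}V is the direct sum of the invariants of the tensor module TV under the signed cyclic action and the desuspended coinvariants of positive length: HH_*(k ⊕ s^{-1}V) ≅ TV^τ ⊕ (s^{-1} ⊗ 1)(⊕_{n≥1} T^nV_τ), where τ acts on T^nV by τ·[v_1|…|v_n] = (−1)^{|v_n||v_1…v_{n−1}|}[v_n|v_1|…|v_{n−1}], T^nV^τ is the kernel of 1−τ and T^nV_τ the cokernel of 1−τ. -/

import Mathlib

/-!
STATEMENT 12.  Let `V` be a graded `k`-module (modeled as the free module on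
a basis `B` with degree function `deg : B → ℤ`, so that the Koszul signs of
the cyclic operator are defined), and consider the square-zero graded algebra
`k ⊕ s⁻¹V`.  Its Hochschild complex `C(k ⊕ s⁻¹V)` is modeled on the basis
`Option B × List B`: a generator `(o, [b₁,…,bₙ])` is `a[s a₁|…|s aₙ]` where
`a = 1` if `o = none` and `a = s⁻¹ v_b` if `o = some b`, and `a_i = s⁻¹ v_{bᵢ}`
(so `|s aᵢ| = deg bᵢ`).  Since the product is trivial, the Hochschild
differential is as computed in `hhD` below.  Statement:
`HH_*(k ⊕ s⁻¹V) ≅ TV^τ ⊕ (s⁻¹ ⊗ 1)(⊕_{n≥1} TⁿV_τ)`, the invariants of `TV`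
under the signed cyclic action together with the desuspended coinvariants of
positive tensor length.
-/

/-- `(-1)^m`. -/
def sgn (m : ℤ) : ℤ := if Even m then 1 else -1

/-- Total degree of a word. -/
def degW {B : Type*} (deg : B → ℤ) (l : List B) : ℤ := (l.map deg).sum

/-- The signed cyclic operator on the tensor module `TV`:
`τ·[v₁|…|vₙ] = (-1)^{|vₙ||v₁…v_{n-1}|}[vₙ|v₁|…|v_{n-1}]`. -/
noncomputable def cyclicTau {k B : Type*} [CommRing k] (deg : B → ℤ) :
    (List B →₀ k) →ₗ[k] (List B →₀ k) :=
  Finsupp.lift _ k _ fun l =>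
    match l with
    | [] => Finsupp.single [] 1
    | b :: t =>
      sgn (deg ((b :: t).getLast (by simp)) * degW deg (b :: t).dropLast) •
        Finsupp.single ((b :: t).getLast (by simp) :: (b :: t).dropLast) 1

/-- Same operator on words of positive length. -/
noncomputable def cyclicTauPos {k B : Type*} [CommRing k] (deg : B → ℤ) :
    ({l : List B // l ≠ []} →₀ k) →ₗ[k] ({l : List B // l ≠ []} →₀ k) :=
  Finsupp.lift _ k _ fun l =>
    sgn (deg (l.1.getLast l.2) * degW deg l.1.dropLast) •
      Finsupp.single ⟨l.1.getLast l.2 :: l.1.dropLast, by simp⟩ 1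

/-- The Hochschild differential of the square-zero algebra `k ⊕ s⁻¹V` on the
basis of its Hochschild complex.  All terms involving a product of two
elements of `s⁻¹V` vanish; only the two outer face maps applied to chains with
first factor the unit survive. -/
noncomputable def hhD {k B : Type*} [CommRing k] (deg : B → ℤ)
    (g : Option B × List B) : (Option B × List B) →₀ k :=
  match g with
  | (none, b :: l) =>
      Finsupp.single (some b, l) 1
      - sgn (deg ((b :: l).getLast (by simp)) * degW deg (b :: l).dropLast) •
          Finsupp.single (some ((b :: l).getLast (by simp)), (b :: l).dropLast) 1
  | _ => 0

/-- The Hochschild differential, extended `k`-linearly. -/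
noncomputable def hhDiff (k : Type*) {B : Type*} [CommRing k] (deg : B → ℤ) :
    ((Option B × List B) →₀ k) →ₗ[k] ((Option B × List B) →₀ k) :=
  Finsupp.lift _ k _ (hhD deg)

/-!
Sending `(none, l)` to `l` and `(some b, t)` to `b :: t` splits the Hochschild complex as
`TV ⊕ T⁺V`, and in this splitting the differential is `(u, w) ↦ (0, (1 - τ) (u|_{T⁺V}))`.
A differential of the shape `(m, n) ↦ (0, f m)` has cycles `ker f × N` and boundaries
`0 × range f`, so its homology is `ker f × coker f`. Here `ker f = ker (1 - τ)` because
`1 - τ` kills the empty word, and `range f = range (1 - τ)` on `T⁺V` because restriction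
to positive length is surjective.
-/

section SplitDifferential

variable {R C M N : Type*} [Ring R] [AddCommGroup C] [AddCommGroup M] [AddCommGroup N]
  [Module R C] [Module R M] [Module R N]
  {d : C →ₗ[R] C} {e : C ≃ₗ[R] M × N} {f : M →ₗ[R] N}

lemma comp_self_eq_zero_of_split (hd : ∀ x, e (d x) = (0, f (e x).1)) : d ∘ₗ d = 0 := by
  ext x
  apply e.injective
  simp [hd]

lemma mem_ker_iff_of_split (hd : ∀ x, e (d x) = (0, f (e x).1)) (x : C) :
    x ∈ LinearMap.ker d ↔ (e x).1 ∈ LinearMap.ker f := by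
  rw [LinearMap.mem_ker, LinearMap.mem_ker, ← e.map_eq_zero_iff, hd, Prod.mk_eq_zero]
  exact and_iff_right rfl

lemma mem_range_iff_of_split (hd : ∀ x, e (d x) = (0, f (e x).1)) (x : C) :
    x ∈ LinearMap.range d ↔ (e x).1 = 0 ∧ (e x).2 ∈ LinearMap.range f := by
  constructor
  · rintro ⟨y, rfl⟩
    rw [hd]
    exact ⟨rfl, _, rfl⟩
  · rintro ⟨h₁, y, hy⟩
    refine ⟨e.symm (y, 0), e.injective ?_⟩
    rw [hd, LinearEquiv.apply_symm_apply, hy, ← h₁]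

theorem exists_surjective_ker_eq_range_of_split (hd : ∀ x, e (d x) = (0, f (e x).1)) :
    ∃ φ : LinearMap.ker d →ₗ[R] LinearMap.ker f × (N ⧸ LinearMap.range f),
      Function.Surjective φ ∧
      LinearMap.ker φ = (LinearMap.range d).comap (LinearMap.ker d).subtype := by
  let ι := e.toLinearMap ∘ₗ (LinearMap.ker d).subtype
  let φ : LinearMap.ker d →ₗ[R] LinearMap.ker f × (N ⧸ LinearMap.range f) :=
    LinearMap.prod
      (LinearMap.codRestrict _ (LinearMap.fst R M N ∘ₗ ι) fun x =>
        (mem_ker_iff_of_split hd x).1 x.2)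
      ((LinearMap.range f).mkQ ∘ₗ LinearMap.snd R M N ∘ₗ ι)
  have hφ : ∀ x, φ x =
      (⟨(e x).1, (mem_ker_iff_of_split hd x).1 x.2⟩, Submodule.Quotient.mk (e x).2) :=
    fun _ => rfl
  refine ⟨φ, ?_, ?_⟩
  · rintro ⟨⟨m, hm⟩, q⟩
    obtain ⟨n, rfl⟩ := Submodule.mkQ_surjective _ q
    have hx : e.symm (m, n) ∈ LinearMap.ker d := by
      rwa [mem_ker_iff_of_split hd, LinearEquiv.apply_symm_apply]
    exact ⟨⟨_, hx⟩, by simp [hφ]⟩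
  · ext x
    simp [hφ, mem_range_iff_of_split hd]

end SplitDifferential

def consEquivNeNil (B : Type*) : B × List B ≃ {l : List B // l ≠ []} where
  toFun p := ⟨p.1 :: p.2, List.cons_ne_nil _ _⟩
  invFun l := (l.1.head l.2, l.1.tail)
  left_inv _ := rfl
  right_inv l := Subtype.ext (List.cons_head_tail l.2)

@[simp]
lemma consEquivNeNil_apply {B : Type*} (b : B) (l : List B) :
    consEquivNeNil B (b, l) = ⟨b :: l, List.cons_ne_nil b l⟩ :=
  rfl

section SquareZero

variable (k : Type*) {B : Type*} [CommRing k] (deg : B → ℤ)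

noncomputable def hochschildSplit :
    ((Option B × List B) →₀ k) ≃ₗ[k]
      (List B →₀ k) × ({l : List B // l ≠ []} →₀ k) :=
  (Finsupp.domLCongr (optionProdEquiv.trans ((Equiv.refl _).sumCongr (consEquivNeNil B)))).trans
    (Finsupp.sumFinsuppLEquivProdFinsupp k)

noncomputable def restrictNeNil : (List B →₀ k) →ₗ[k] ({l : List B // l ≠ []} →₀ k) :=
  Finsupp.lsubtypeDomain {l | l ≠ []}

lemma hochschildSplit_single_none (l : List B) (c : k) :
    hochschildSplit k (Finsupp.single (none, l) c) = (Finsupp.single l c, 0) := by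
  simp [hochschildSplit]

lemma hochschildSplit_single_some (b : B) (l : List B) (c : k) :
    hochschildSplit k (Finsupp.single (some b, l) c)
      = (0, Finsupp.single ⟨b :: l, List.cons_ne_nil b l⟩ c) := by
  simp [hochschildSplit]

lemma restrictNeNil_single_nil (c : k) : restrictNeNil k (Finsupp.single ([] : List B) c) = 0 := by
  ext ⟨l, hl⟩
  show Finsupp.single [] c l = 0
  simp [hl.symm]

lemma restrictNeNil_single_cons (b : B) (l : List B) (c : k) :
    restrictNeNil k (Finsupp.single (b :: l) c)
      = Finsupp.single ⟨b :: l, List.cons_ne_nil b l⟩ c := by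
  classical
  ext ⟨l', hl'⟩
  show Finsupp.single (b :: l) c l' = _
  simp [Finsupp.single_apply]

lemma hochschildSplit_hhDiff (x : (Option B × List B) →₀ k) :
    hochschildSplit k (hhDiff k deg x)
      = (0, ((LinearMap.id - cyclicTauPos deg) ∘ₗ restrictNeNil k)
          (hochschildSplit k x).1) := by
  suffices h : (hochschildSplit k).toLinearMap ∘ₗ hhDiff k deg = LinearMap.inr k _ _ ∘ₗ
      ((LinearMap.id - cyclicTauPos deg) ∘ₗ restrictNeNil k) ∘ₗ LinearMap.fst k _ _ ∘ₗ
        (hochschildSplit k).toLinearMap from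
    LinearMap.congr_fun h x
  refine Finsupp.lhom_ext fun g c => ?_
  obtain ⟨_ | b, _ | ⟨a, t⟩⟩ := g <;>
    simp [hhDiff, hhD, cyclicTauPos, hochschildSplit_single_none, hochschildSplit_single_some,
      restrictNeNil_single_nil, restrictNeNil_single_cons, smul_sub, Prod.mk_zero_zero,
      -Finsupp.single_mul]

lemma id_sub_cyclicTau_eq :
    LinearMap.id - cyclicTau deg
      = Finsupp.lmapDomain k k Subtype.val ∘ₗ (LinearMap.id - cyclicTauPos deg) ∘ₗ
          restrictNeNil k := by
  refine Finsupp.lhom_ext fun l c => ?_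
  rcases l with _ | ⟨b, l⟩
  · simp [cyclicTau, restrictNeNil_single_nil]
  · simp [cyclicTau, cyclicTauPos, restrictNeNil_single_cons, Finsupp.mapDomain_sub,
      Finsupp.mapDomain_single, -Finsupp.single_mul]

lemma ker_id_sub_cyclicTau :
    LinearMap.ker (LinearMap.id - cyclicTau (k := k) deg)
      = LinearMap.ker ((LinearMap.id - cyclicTauPos deg) ∘ₗ restrictNeNil k) := by
  rw [id_sub_cyclicTau_eq, LinearMap.ker_comp_of_ker_eq_bot]
  exact LinearMap.ker_eq_bot.2 (Finsupp.mapDomain_injective Subtype.val_injective)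

lemma restrictNeNil_surjective : Function.Surjective (restrictNeNil k (B := B)) := fun g =>
  ⟨Finsupp.mapDomain Subtype.val g,
    Finsupp.ext fun l => Finsupp.mapDomain_apply Subtype.val_injective g l⟩

lemma range_id_sub_cyclicTauPos_comp_restrictNeNil :
    LinearMap.range ((LinearMap.id - cyclicTauPos deg) ∘ₗ restrictNeNil k)
      = LinearMap.range (LinearMap.id - cyclicTauPos (k := k) deg) :=
  LinearMap.range_comp_of_range_eq_top _ (LinearMap.range_eq_top.2 (restrictNeNil_surjective k))

end SquareZero

theorem HH_of_square_zero_algebra (k B : Type*) [CommRing k] (deg : B → ℤ) :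
    -- it is a complex
    hhDiff k deg ∘ₗ hhDiff k deg = 0 ∧
    -- and its homology is `TV^τ ⊕ (s⁻¹ ⊗ 1)(⊕_{n≥1} TⁿV_τ)`: a surjection
    -- from cycles with kernel exactly the boundaries
    ∃ φ : LinearMap.ker (hhDiff k deg) →ₗ[k]
        (LinearMap.ker (LinearMap.id - cyclicTau (k := k) deg) ×
         (({l : List B // l ≠ []} →₀ k) ⧸
            LinearMap.range (LinearMap.id - cyclicTauPos (k := k) deg))),
      Function.Surjective φ ∧
      LinearMap.ker φ
        = (LinearMap.range (hhDiff k deg)).comap (LinearMap.ker (hhDiff k deg)).subtype := by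
  have hd := hochschildSplit_hhDiff k deg
  refine ⟨comp_self_eq_zero_of_split hd, ?_⟩
  obtain ⟨φ, hφ, hker⟩ := exists_surjective_ker_eq_range_of_split hd
  let ψ := (LinearEquiv.ofEq _ _ (ker_id_sub_cyclicTau k deg).symm).prodCongr
    (Submodule.quotEquivOfEq _ _ (range_id_sub_cyclicTauPos_comp_restrictNeNil k deg))
  exact ⟨ψ.toLinearMap ∘ₗ φ, ψ.surjective.comp hφ, by rw [LinearEquiv.ker_comp, hker]⟩
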